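/- Let A ∈ ℝ^{n×n} be symmetric positive definite, let S ∈ ℝ^{n×n_s} and R ∈ ℝ^{n_c×n} satisfy RS = 0, SᵀS = I_s, RRᵀ = I_c and n_s + n_c = n, and set P⋆ = (I − S(SᵀAS)⁻¹SᵀA)Rᵀ. Then the A-orthogonal projections onto range(P⋆) and range(S) sum to the identity: P⋆(P⋆ᵀAP⋆)⁻¹P⋆ᵀA + S(SᵀAS)⁻¹SᵀA = I. -/

import Mathlib

/-!
`P⋆ = (I − π_A(S))Rᵀ` is `A`-orthogonal to `S`, so `Q := π_A(P⋆) + π_A(S)` fixes both `S` and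
`P⋆`, hence also `Rᵀ = P⋆ + π_A(S)Rᵀ`. Since `[S Rᵀ]` is an orthogonal matrix,
`SSᵀ + RᵀR = I`, and therefore `Q = Q(SSᵀ + RᵀR) = SSᵀ + RᵀR = I`.
-/

open Matrix

namespace Matrix

variable {K : Type*} {n m k : Type*} [Fintype n] [Fintype m] [DecidableEq m]

section CommRing

variable [CommRing K]

/-- `π_A(P)`: for full-column-rank `P` and SPD `A`, the `A`-orthogonal projection onto `range P`. -/
noncomputable def aOrthogonalProj (A : Matrix n n K) (P : Matrix n m K) : Matrix n n K :=
  P * (Pᵀ * A * P)⁻¹ * Pᵀ * A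

variable {A : Matrix n n K} {P : Matrix n m K}

theorem aOrthogonalProj_mul_self (hP : IsUnit (Pᵀ * A * P).det) :
    aOrthogonalProj A P * P = P := by
  simp only [aOrthogonalProj, Matrix.mul_assoc]
  rw [← Matrix.mul_assoc Pᵀ, nonsing_inv_mul _ hP, Matrix.mul_one]

theorem aOrthogonalProj_mul_eq_zero {S : Matrix n k K} (hPS : Pᵀ * A * S = 0) :
    aOrthogonalProj A P * S = 0 := by
  simp only [aOrthogonalProj, Matrix.mul_assoc]
  rw [← Matrix.mul_assoc Pᵀ A S, hPS, Matrix.mul_zero, Matrix.mul_zero]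

theorem mul_aOrthogonalProj_eq_zero {R : Matrix k n K} (hRP : R * P = 0) :
    R * aOrthogonalProj A P = 0 := by
  simp only [aOrthogonalProj, ← Matrix.mul_assoc, hRP, Matrix.zero_mul]

theorem transpose_mul_mul_one_sub_aOrthogonalProj [DecidableEq n]
    (hP : IsUnit (Pᵀ * A * P).det) :
    Pᵀ * A * (1 - aOrthogonalProj A P) = 0 := by
  rw [Matrix.mul_sub, Matrix.mul_one, aOrthogonalProj]
  simp only [← Matrix.mul_assoc]
  rw [mul_nonsing_inv _ hP, Matrix.one_mul, sub_self]

theorem mulVec_injective_of_mul_eq_one {L : Matrix m n K} (h : L * P = 1) :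
    Function.Injective P.mulVec :=
  Function.LeftInverse.injective (g := L.mulVec) fun x => by rw [mulVec_mulVec, h, one_mulVec]

/-- `[S Rᵀ]` is square with `[S Rᵀ]ᵀ[S Rᵀ] = I`, hence also `[S Rᵀ][S Rᵀ]ᵀ = I`. -/
theorem mul_transpose_add_transpose_mul_eq_one [Fintype k] [DecidableEq n] [DecidableEq k]
    (e : n ≃ m ⊕ k) {S : Matrix n m K} {R : Matrix k n K}
    (hS : Sᵀ * S = 1) (hR : R * Rᵀ = 1) (hRS : R * S = 0) :
    S * Sᵀ + Rᵀ * R = 1 := by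
  have hSR : Sᵀ * Rᵀ = 0 := by rw [← transpose_mul, hRS, transpose_zero]
  rw [← fromCols_mul_fromRows, fromCols_mul_fromRows_eq_one_comm e, fromRows_mul_fromCols,
    hS, hSR, hRS, hR, fromBlocks_one]

end CommRing

theorem PosDef.isUnit_det_transpose_mul_mul [Field K] [PartialOrder K] [StarRing K]
    [TrivialStar K] {A : Matrix n n K} (hA : A.PosDef) {B : Matrix n m K}
    (hB : Function.Injective B.mulVec) : IsUnit (Bᵀ * A * B).det := by
  rw [← isUnit_iff_isUnit_det, ← conjTranspose_eq_transpose_of_trivial]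
  exact (hA.conjTranspose_mul_mul_same hB).isUnit

end Matrix

/-- With GAMG orthogonality conditions and `P⋆` the ideal interpolation, the
`A`-orthogonal projections onto `range P⋆` and `range S` sum to the identity:
`P⋆(P⋆ᵀAP⋆)⁻¹P⋆ᵀA + S(SᵀAS)⁻¹SᵀA = I`. -/
theorem ideal_interpolation_projections_sum_to_identity {n ns nc : ℕ}
    (A : Matrix (Fin n) (Fin n) ℝ) (hA : A.PosDef)
    (S : Matrix (Fin n) (Fin ns) ℝ) (R : Matrix (Fin nc) (Fin n) ℝ)
    (hRS : R * S = 0) (hS : Sᵀ * S = 1) (hR : R * Rᵀ = 1)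
    (hdim : ns + nc = n)
    (P : Matrix (Fin n) (Fin nc) ℝ)
    (hP : P = (1 - S * (Sᵀ * A * S)⁻¹ * Sᵀ * A) * Rᵀ) :
    P * (Pᵀ * A * P)⁻¹ * Pᵀ * A + S * (Sᵀ * A * S)⁻¹ * Sᵀ * A = 1 := by
  change aOrthogonalProj A P + aOrthogonalProj A S = 1
  change P = (1 - aOrthogonalProj A S) * Rᵀ at hP
  have hSS := hA.isUnit_det_transpose_mul_mul (mulVec_injective_of_mul_eq_one hS)
  have hRP : R * P = 1 := by
    rw [hP, Matrix.sub_mul, Matrix.one_mul, Matrix.mul_sub, hR, ← Matrix.mul_assoc,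
      mul_aOrthogonalProj_eq_zero hRS, Matrix.zero_mul, sub_zero]
  have hPP := hA.isUnit_det_transpose_mul_mul (mulVec_injective_of_mul_eq_one hRP)
  have hSP : Sᵀ * A * P = 0 := by
    rw [hP, ← Matrix.mul_assoc, transpose_mul_mul_one_sub_aOrthogonalProj hSS, Matrix.zero_mul]
  have hPS : Pᵀ * A * S = 0 := by
    simpa [Matrix.mul_assoc, ← conjTranspose_eq_transpose_of_trivial, hA.1.eq] using
      congrArg transpose hSP
  set Q := aOrthogonalProj A P + aOrthogonalProj A S
  have hQS : Q * S = S := by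
    rw [Matrix.add_mul, aOrthogonalProj_mul_eq_zero hPS, aOrthogonalProj_mul_self hSS, zero_add]
  have hQP : Q * P = P := by
    rw [Matrix.add_mul, aOrthogonalProj_mul_eq_zero hSP, aOrthogonalProj_mul_self hPP, add_zero]
  have hQR : Q * Rᵀ = Rᵀ := by
    have hRt : Rᵀ = P + S * ((Sᵀ * A * S)⁻¹ * Sᵀ * A * Rᵀ) := by
      rw [hP, aOrthogonalProj, Matrix.sub_mul, Matrix.one_mul]
      simp only [Matrix.mul_assoc, sub_add_cancel]
    rw [hRt, Matrix.mul_add, hQP, ← Matrix.mul_assoc, hQS]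
  have hSR := mul_transpose_add_transpose_mul_eq_one
    ((finCongr hdim.symm).trans finSumFinEquiv.symm) hS hR hRS
  calc Q = Q * (S * Sᵀ + Rᵀ * R) := by rw [hSR, Matrix.mul_one]
    _ = S * Sᵀ + Rᵀ * R := by simp only [Matrix.mul_add, ← Matrix.mul_assoc, hQS, hQR]
    _ = 1 := hSR
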